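/- arXiv:2005.03829 — 4 statements merged into one kernel-verified Lean document; each statement's English description precedes it below -/
import Mathlib

section
/- Let G be a finite group whose order is divisible by at least two distinct primes, and let x and y be two distinct elements of G. Then N[x] = N[y] in the order supergraph 𝒮(G) if and only if one of the following occurs: (i) o(x) = o(y); (ii) {o(x), o(y)} = {1, exp(G)}, where exp(G) is the exponent of G; (iii) {o(x), o(y)} = {p^m, p^n} for some prime p and positive integers m > n, and p^n·q ∉ π_e(G) for every prime q ≠ p. -/
/-- The closed neighborhood of a vertex `x` in a simple graph. -/
def closedNbhd {V : Type*} (Γ : SimpleGraph V) (x : V) : Set V :=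
  insert x (Γ.neighborSet x)

/-- `z` strongly resolves `x` and `y` if some shortest path from `z` to `x`
contains `y`, or some shortest path from `z` to `y` contains `x`. -/
def StronglyResolves {V : Type*} (Γ : SimpleGraph V) (z x y : V) : Prop :=
  (∃ w : Γ.Walk z x, w.IsPath ∧ w.length = Γ.dist z x ∧ y ∈ w.support) ∨
  (∃ w : Γ.Walk z y, w.IsPath ∧ w.length = Γ.dist z y ∧ x ∈ w.support)

/-- `S` is a strong resolving set if every pair of distinct vertices is
strongly resolved by some vertex of `S`. -/
def IsStrongResolvingSet {V : Type*} (Γ : SimpleGraph V) (S : Set V) : Prop :=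
  ∀ x y : V, x ≠ y → ∃ z ∈ S, StronglyResolves Γ z x y

/-- The strong metric dimension: the minimum size of a strong resolving set. -/
noncomputable def sdim {V : Type*} [Fintype V] (Γ : SimpleGraph V) : ℕ :=
  sInf {k | ∃ S : Finset V, S.card = k ∧ IsStrongResolvingSet Γ ↑S}

/-- The equivalence relation `x ≈ y` iff `N[x] = N[y]`. -/
def nbhdSetoid {V : Type*} (Γ : SimpleGraph V) : Setoid V :=
  ⟨fun x y => closedNbhd Γ x = closedNbhd Γ y,
   ⟨fun _ => rfl, Eq.symm, Eq.trans⟩⟩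

/-- The reduced graph `ℛ_Γ`: vertices are the `≈`-classes, two distinct classes
being adjacent iff some (equivalently, any) pair of their members is adjacent in `Γ`. -/
def reducedGraph {V : Type*} (Γ : SimpleGraph V) :
    SimpleGraph (Quotient (nbhdSetoid Γ)) where
  Adj a b := a ≠ b ∧ ∃ x y : V,
    Quotient.mk (nbhdSetoid Γ) x = a ∧ Quotient.mk (nbhdSetoid Γ) y = b ∧ Γ.Adj x y
  symm := ⟨by rintro a b ⟨h, x, y, hx, hy, hadj⟩; exact ⟨h.symm, y, x, hy, hx, hadj.symm⟩⟩
  loopless := ⟨by rintro a ⟨h, -⟩; exact h rfl⟩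

/-- The order supergraph `𝒮(G)`: distinct `x, y` are adjacent iff
`o(x) ∣ o(y)` or `o(y) ∣ o(x)`. -/
def orderSupergraph (G : Type*) [Group G] : SimpleGraph G where
  Adj x y := x ≠ y ∧ (orderOf x ∣ orderOf y ∨ orderOf y ∣ orderOf x)
  symm := ⟨by rintro x y ⟨h, h2⟩; exact ⟨h.symm, h2.symm⟩⟩
  loopless := ⟨by rintro x ⟨h, -⟩; exact h rfl⟩

/-- The enhanced power graph `𝒫_E(G)`: distinct `x, y` are adjacent iff
`⟨x, y⟩` is cyclic. -/
def enhancedPowerGraph (G : Type*) [Group G] : SimpleGraph G where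
  Adj x y := x ≠ y ∧ IsCyclic (Subgroup.closure ({x, y} : Set G))
  symm := ⟨by rintro x y ⟨h, h2⟩; rw [Set.pair_comm] at h2; exact ⟨h.symm, h2⟩⟩
  loopless := ⟨by rintro x ⟨h, -⟩; exact h rfl⟩

/-- The reduced power graph `𝒫_R(G)`: distinct `x, y` are adjacent iff
`⟨x⟩ ⊂ ⟨y⟩` or `⟨y⟩ ⊂ ⟨x⟩`. -/
def reducedPowerGraph (G : Type*) [Group G] : SimpleGraph G where
  Adj x y := Subgroup.zpowers x < Subgroup.zpowers y ∨ Subgroup.zpowers y < Subgroup.zpowers x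
  symm := ⟨by rintro x y h; exact h.symm⟩
  loopless := ⟨by rintro x h; rcases h with h | h <;> exact lt_irrefl _ h⟩

/-- `Ω n`: the number of prime factors of `n` counted with multiplicity. -/
def bigOmega (n : ℕ) : ℕ := n.primeFactorsList.length

/-- A maximal cyclic subgroup: a cyclic subgroup not properly contained in any
cyclic subgroup. -/
def IsMaxCyclic {G : Type*} [Group G] (M : Subgroup G) : Prop :=
  IsCyclic M ∧ ∀ N : Subgroup G, IsCyclic N → M ≤ N → M = N

/-- `ℳ_g`: the set of maximal cyclic subgroups containing `g`. -/
def maxCyclicOn {G : Type*} [Group G] (g : G) : Set (Subgroup G) :=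
  {M | IsMaxCyclic M ∧ g ∈ M}

/-!
Write `D(n)` for the set of elements whose order is comparable with `n` under divisibility, so
that `N[x] = D(o(x))`. If `a ∣ b` are element orders with `D(a) = D(b)` and `a ≠ b`, test the
equality on elements of prime-power order. For `a = 1`, every order is comparable with `b`;
Cauchy's theorem puts two distinct primes into `b`, so `b` is no prime power and no order can
properly exceed it: `b = exp(G)`. For `a ≠ 1`, an element of order `p ^ j ∣ b` with `p ^ j ∤ a`
forces `a ∣ p ^ j`, and elements of prime order `r ∣ b` force `r ∣ a`; hence `a = p ^ k` and
`b = p ^ m`, and an element of order `p ^ k q` would lie in `D(a)` but not in `D(b)`.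
Conversely, when no order `p ^ k q` occurs, every order divisible by `p ^ k` is a power of `p`.
-/

lemma Set.apply_eq_apply_of_pair_eq_pair {α β : Type*} {a b c d : α} {f : α → β}
    (h : ({a, b} : Set α) = {c, d}) (hf : f c = f d) : f a = f b := by
  rcases Set.pair_eq_pair_iff.mp h with ⟨rfl, rfl⟩ | ⟨rfl, rfl⟩
  exacts [hf, hf.symm]

namespace Nat

lemma exists_prime_pow_dvd_not_dvd {b c : ℕ} (h : ¬ c ∣ b) :
    ∃ p k, p.Prime ∧ p ^ k ∣ c ∧ ¬ p ^ k ∣ b := by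
  simpa [Nat.dvd_iff_prime_pow_dvd_dvd b c] using h

lemma Prime.dvd_of_dvd_or_dvd {n r : ℕ} (hr : r.Prime) (hn : n ≠ 1) (h : n ∣ r ∨ r ∣ n) :
    r ∣ n := by
  rcases h with h | h
  · rcases (Nat.dvd_prime hr).mp h with h | rfl
    exacts [absurd h hn, dvd_rfl]
  · exact h

lemma pow_dvd_pow_or_pow_dvd_pow (p i j : ℕ) : p ^ i ∣ p ^ j ∨ p ^ j ∣ p ^ i :=
  (le_total i j).imp (Nat.pow_dvd_pow p) (Nat.pow_dvd_pow p)

lemma not_prime_pow_dvd_or_dvd_prime_pow_mul {p q k m : ℕ} (hp : p.Prime) (hq : q.Prime)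
    (hqp : q ≠ p) (hkm : k < m) : ¬ (p ^ m ∣ p ^ k * q ∨ p ^ k * q ∣ p ^ m) := by
  rintro (h | h)
  · have hcop : Nat.Coprime (p ^ m) q :=
      Nat.Coprime.pow_left _ ((Nat.coprime_primes hp hq).mpr hqp.symm)
    have := (Nat.pow_dvd_pow_iff_le_right hp.one_lt).mp (hcop.dvd_of_dvd_mul_right h)
    omega
  · exact hqp ((Nat.prime_dvd_prime_iff_eq hq hp).mp
      (hq.dvd_of_dvd_pow ((dvd_mul_left q _).trans h)))

end Nat

section OrderComparable

variable {G : Type*} [Group G]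

variable (G) in
def orderComparable (n : ℕ) : Set G :=
  {z | n ∣ orderOf z ∨ orderOf z ∣ n}

@[simp]
lemma mem_orderComparable {n : ℕ} {z : G} :
    z ∈ orderComparable G n ↔ n ∣ orderOf z ∨ orderOf z ∣ n :=
  Iff.rfl

lemma closedNbhd_orderSupergraph (x : G) :
    closedNbhd (orderSupergraph G) x = orderComparable G (orderOf x) := by
  ext z
  by_cases hz : z = x
  · simp [closedNbhd, hz]
  · simp [closedNbhd, orderSupergraph, hz, Ne.symm hz]

variable (G) in
lemma orderComparable_one : orderComparable G 1 = Set.univ :=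
  Set.eq_univ_of_forall fun _ => Or.inl (one_dvd _)

variable (G) in
lemma orderComparable_exponent : orderComparable G (Monoid.exponent G) = Set.univ :=
  Set.eq_univ_of_forall fun z => Or.inr (Monoid.order_dvd_exponent z)

variable [Finite G]

lemma exists_orderOf_eq_of_dvd {y : G} {d : ℕ} (hd : d ∣ orderOf y) : ∃ w : G, orderOf w = d :=
  ⟨_, orderOf_pow_orderOf_div (orderOf_pos y).ne' hd⟩

lemma dvd_or_dvd_of_orderComparable_eq {a d : ℕ} {y : G}
    (hD : orderComparable G a = orderComparable G (orderOf y)) (hd : d ∣ orderOf y) :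
    a ∣ d ∨ d ∣ a := by
  obtain ⟨w, rfl⟩ := exists_orderOf_eq_of_dvd hd
  exact (hD ▸ Or.inr hd : w ∈ orderComparable G a)

lemma orderComparable_prime_pow_eq {p k m : ℕ} (hp : p.Prime) (hkm : k ≤ m)
    (hq : ∀ q : ℕ, q.Prime → q ≠ p → ¬∃ g : G, orderOf g = p ^ k * q) :
    orderComparable G (p ^ k) = orderComparable G (p ^ m) := by
  ext z
  simp only [mem_orderComparable]
  constructor
  · rintro (h | h)
    · have hz : orderOf z = p ^ (orderOf z).primeFactorsList.length := by
        refine Nat.eq_prime_pow_of_unique_prime_dvd (orderOf_pos z).ne' fun {r} hr hrz => ?_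
        by_contra hrp
        have hcop : Nat.Coprime (p ^ k) r :=
          Nat.Coprime.pow_left _ ((Nat.coprime_primes hp hr).mpr (Ne.symm hrp))
        exact hq r hr hrp (exists_orderOf_eq_of_dvd (hcop.mul_dvd_of_dvd_of_dvd h hrz))
      rw [hz]
      exact Nat.pow_dvd_pow_or_pow_dvd_pow p m _
    · exact Or.inr (h.trans (Nat.pow_dvd_pow p hkm))
  · rintro (h | h)
    · exact Or.inl ((Nat.pow_dvd_pow p hkm).trans h)
    · obtain ⟨j, -, hj⟩ := (Nat.dvd_prime_pow hp).mp h
      rw [hj]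
      exact Nat.pow_dvd_pow_or_pow_dvd_pow p k j

lemma exponent_eq_of_orderComparable_eq_univ
    (hG : ∃ p q : ℕ, p.Prime ∧ q.Prime ∧ p ≠ q ∧ p ∣ Nat.card G ∧ q ∣ Nat.card G)
    {y : G} (hy : orderOf y ≠ 1) (h : orderComparable G (orderOf y) = Set.univ) :
    Monoid.exponent G = orderOf y := by
  have hcomp (z : G) : orderOf y ∣ orderOf z ∨ orderOf z ∣ orderOf y :=
    Set.eq_univ_iff_forall.mp h z
  have hprime {s : ℕ} (hs : s.Prime) (hsG : s ∣ Nat.card G) : s ∣ orderOf y := by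
    have := Fact.mk hs
    obtain ⟨u, hu⟩ := exists_prime_orderOf_dvd_card' s hsG
    exact hs.dvd_of_dvd_or_dvd hy (hu ▸ hcomp u)
  have hnot_pow {r k : ℕ} (hr : r.Prime) : ¬ orderOf y ∣ r ^ k := by
    intro hyr
    obtain ⟨p, q, hp, hq, hpq, hpG, hqG⟩ := hG
    obtain ⟨s, hs, hsr, hsG⟩ : ∃ s, s.Prime ∧ s ≠ r ∧ s ∣ Nat.card G := by
      by_cases hpr : p = r
      exacts [⟨q, hq, hpr ▸ hpq.symm, hqG⟩, ⟨p, hp, hpr, hpG⟩]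
    exact hsr ((Nat.prime_dvd_prime_iff_eq hs hr).mp
      (hs.dvd_of_dvd_pow ((hprime hs hsG).trans hyr)))
  refine Nat.dvd_antisymm (Monoid.exponent_dvd.mpr fun z => ?_) (Monoid.order_dvd_exponent y)
  by_contra hzy
  obtain ⟨r, k, hr, hrz, hry⟩ := Nat.exists_prime_pow_dvd_not_dvd hzy
  obtain ⟨w, hw⟩ := exists_orderOf_eq_of_dvd hrz
  exact (hw ▸ hcomp w).elim (hnot_pow hr) hry

lemma exists_prime_pow_of_orderComparable_eq {a : ℕ} {y : G} (ha : a ≠ 1)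
    (hay : a ∣ orderOf y) (hne : a ≠ orderOf y)
    (hD : orderComparable G a = orderComparable G (orderOf y)) :
    ∃ p k m : ℕ, p.Prime ∧ 0 < k ∧ k < m ∧ a = p ^ k ∧ orderOf y = p ^ m := by
  obtain ⟨p, j, hp, hpy, hpa⟩ :=
    Nat.exists_prime_pow_dvd_not_dvd fun h => hne (Nat.dvd_antisymm hay h)
  obtain ⟨k, -, rfl⟩ :=
    (Nat.dvd_prime_pow hp).mp ((dvd_or_dvd_of_orderComparable_eq hD hpy).resolve_right hpa)
  have hk : 0 < k := Nat.pos_of_ne_zero fun hk => ha (by rw [hk, pow_zero])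
  have hy : orderOf y = p ^ (orderOf y).primeFactorsList.length :=
    Nat.eq_prime_pow_of_unique_prime_dvd (orderOf_pos y).ne' fun {r} hr hry =>
      (Nat.prime_dvd_prime_iff_eq hr hp).mp
        (hr.dvd_of_dvd_pow (hr.dvd_of_dvd_or_dvd ha (dvd_or_dvd_of_orderComparable_eq hD hry)))
  refine ⟨p, k, _, hp, hk, ?_, rfl, hy⟩
  rw [hy] at hay hne
  exact lt_of_le_of_ne ((Nat.pow_dvd_pow_iff_le_right hp.one_lt).mp hay) fun h => hne (h ▸ rfl)

lemma orderOf_cases_of_orderComparable_eq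
    (hG : ∃ p q : ℕ, p.Prime ∧ q.Prime ∧ p ≠ q ∧ p ∣ Nat.card G ∧ q ∣ Nat.card G)
    {x y : G} (hxy : orderOf x ∣ orderOf y)
    (hD : orderComparable G (orderOf x) = orderComparable G (orderOf y)) :
    orderOf x = orderOf y ∨
      ({orderOf x, orderOf y} : Set ℕ) = {1, Monoid.exponent G} ∨
      (∃ p m k : ℕ, p.Prime ∧ 0 < k ∧ k < m ∧
        ({orderOf x, orderOf y} : Set ℕ) = {p ^ m, p ^ k} ∧
        ∀ q : ℕ, q.Prime → q ≠ p → ¬∃ g : G, orderOf g = p ^ k * q) := by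
  rcases eq_or_ne (orderOf x) (orderOf y) with h | hne
  · exact Or.inl h
  by_cases hx : orderOf x = 1
  · rw [hx] at hD hne ⊢
    rw [exponent_eq_of_orderComparable_eq_univ hG hne.symm (hD.symm.trans (orderComparable_one G))]
    exact Or.inr (Or.inl rfl)
  obtain ⟨p, k, m, hp, hk, hkm, hpx, hpy⟩ := exists_prime_pow_of_orderComparable_eq hx hxy hne hD
  refine Or.inr (Or.inr ⟨p, m, k, hp, hk, hkm, by rw [hpx, hpy, Set.pair_comm], ?_⟩)
  rintro q hq hqp ⟨g, hg⟩
  have hgx : g ∈ orderComparable G (orderOf x) :=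
    Or.inl (by rw [hpx, hg]; exact dvd_mul_right _ _)
  rw [hD, mem_orderComparable, hpy, hg] at hgx
  exact Nat.not_prime_pow_dvd_or_dvd_prime_pow_mul hp hq hqp hkm hgx

end OrderComparable

theorem closedNbhd_eq_iff_orderSupergraph_general (G : Type*) [Group G] [Fintype G]
    (hG : ∃ p q : ℕ, p.Prime ∧ q.Prime ∧ p ≠ q ∧ p ∣ Fintype.card G ∧ q ∣ Fintype.card G)
    (x y : G) :
    closedNbhd (orderSupergraph G) x = closedNbhd (orderSupergraph G) y ↔
      (orderOf x = orderOf y ∨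
       ({orderOf x, orderOf y} : Set ℕ) = {1, Monoid.exponent G} ∨
       (∃ p m k : ℕ, p.Prime ∧ 0 < k ∧ k < m ∧
         ({orderOf x, orderOf y} : Set ℕ) = {p ^ m, p ^ k} ∧
         ∀ q : ℕ, q.Prime → q ≠ p → ¬∃ g : G, orderOf g = p ^ k * q)) := by
  simp only [← Nat.card_eq_fintype_card] at hG
  rw [closedNbhd_orderSupergraph, closedNbhd_orderSupergraph]
  constructor
  · intro hD
    have hy : y ∈ orderComparable G (orderOf x) := hD ▸ Or.inl dvd_rfl
    rcases hy with hxy | hyx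
    · exact orderOf_cases_of_orderComparable_eq hG hxy hD
    · simpa only [eq_comm, Set.pair_comm] using
        orderOf_cases_of_orderComparable_eq hG hyx hD.symm
  · rintro (h | h | ⟨p, m, k, hp, -, hkm, h, hq⟩)
    · rw [h]
    · exact Set.apply_eq_apply_of_pair_eq_pair h
        ((orderComparable_one G).trans (orderComparable_exponent G).symm)
    · exact Set.apply_eq_apply_of_pair_eq_pair h (orderComparable_prime_pow_eq hp hkm.le hq).symm

/-- Lemma 3.5: characterization of equal closed neighborhoods in the order supergraph
of a group whose order has at least two distinct prime divisors. -/
theorem closedNbhd_eq_iff_orderSupergraph (G : Type*) [Group G] [Fintype G]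
    (hG : ∃ p q : ℕ, p.Prime ∧ q.Prime ∧ p ≠ q ∧ p ∣ Fintype.card G ∧ q ∣ Fintype.card G)
    (x y : G) (hxy : x ≠ y) :
    closedNbhd (orderSupergraph G) x = closedNbhd (orderSupergraph G) y ↔
      (orderOf x = orderOf y ∨
       ({orderOf x, orderOf y} : Set ℕ) = {1, Monoid.exponent G} ∨
       (∃ p m k : ℕ, p.Prime ∧ 0 < k ∧ k < m ∧
         ({orderOf x, orderOf y} : Set ℕ) = {p ^ m, p ^ k} ∧
         ∀ q : ℕ, q.Prime → q ≠ p → ¬∃ g : G, orderOf g = p ^ k * q)) :=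
  closedNbhd_eq_iff_orderSupergraph_general G hG x y
end

section
/- Let G be a finite group of order n. Then: (i) sdim(𝒫_E(G)) = n − 1 if and only if G is cyclic; (ii) if G is a non-cyclic 𝒫-group, then sdim(𝒫_E(G)) = n − 2. -/
/-! In `𝒫_E(G)` the identity is adjacent to every other element, so the graph has diameter at most
two, and a vertex `z ∉ {x, y}` can strongly resolve `x, y` only through a geodesic of length two
`z - y - x` (or `z - x - y`). If `G` is cyclic the graph is complete and there is no such geodesic,
so a strong resolving set misses at most one vertex. If `G` is a `𝒫`-group, two nontrivial elements
are adjacent exactly when they generate the same subgroup of prime order, so adjacency is transitive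
on `G ∖ {1}`; with `1` adjacent to everything, the geodesic cannot exist for `x, y ≠ 1` either, so a
strong resolving set misses at most one nontrivial element.
Conversely, if `G` is not cyclic, some `x, y` generate a non-cyclic subgroup; then `y - 1 - x` is a
geodesic, and `G ∖ {1, x}` is a strong resolving set. -/

open SimpleGraph Subgroup

section StrongResolving

variable {V : Type*} {Γ : SimpleGraph V}

theorem SimpleGraph.Walk.dist_add_dist_le_of_mem_support {u v w : V} (p : Γ.Walk u v)
    (hp : p.length = Γ.dist u v) (hw : w ∈ p.support) :
    Γ.dist u w + Γ.dist w v ≤ Γ.dist u v := by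
  classical
  calc Γ.dist u w + Γ.dist w v ≤ (p.takeUntil w hw).length + (p.dropUntil w hw).length :=
        add_le_add (dist_le _) (dist_le _)
    _ = Γ.dist u v := by rw [← Walk.length_append, Walk.take_spec, hp]

theorem StronglyResolves.dist_add_dist_le {x y z : V} (h : StronglyResolves Γ z x y) :
    Γ.dist z y + Γ.dist y x ≤ Γ.dist z x ∨ Γ.dist z x + Γ.dist x y ≤ Γ.dist z y := by
  rcases h with ⟨p, -, hp, hy⟩ | ⟨p, -, hp, hx⟩
  · exact .inl (p.dist_add_dist_le_of_mem_support hp hy)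
  · exact .inr (p.dist_add_dist_le_of_mem_support hp hx)

theorem stronglyResolves_comm {x y z : V} :
    StronglyResolves Γ z x y ↔ StronglyResolves Γ z y x :=
  or_comm

theorem stronglyResolves_self_left {x y : V} (h : Γ.Reachable x y) :
    StronglyResolves Γ x x y := by
  obtain ⟨p, hp, hl⟩ := h.exists_path_of_dist
  exact .inr ⟨p, hp, hl, p.start_mem_support⟩

theorem stronglyResolves_of_adj_of_adj {x m z : V} (hzm : Γ.Adj z m) (hmx : Γ.Adj m x)
    (hzx : z ≠ x) (hnadj : ¬Γ.Adj z x) : StronglyResolves Γ z x m := by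
  let p : Γ.Walk z x := .cons hzm (.cons hmx .nil)
  have hreach : Γ.Reachable z x := p.reachable
  have hdist : Γ.dist z x = 2 :=
    le_antisymm (dist_le p) (hreach.one_lt_dist_of_ne_of_not_adj hzx hnadj)
  refine .inl ⟨p, ?_, hdist.symm, by simp [p]⟩
  simp [p, Walk.isPath_def, hzm.ne, hmx.ne, hzx]

theorem isStrongResolvingSet_of_forall_mem_or_mem (hΓ : Γ.Connected) {S : Set V}
    (hS : ∀ x y, x ≠ y → x ∈ S ∨ y ∈ S) : IsStrongResolvingSet Γ S := by
  intro x y hxy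
  rcases hS x y hxy with hx | hy
  · exact ⟨x, hx, stronglyResolves_self_left (hΓ x y)⟩
  · exact ⟨y, hy, stronglyResolves_comm.mp (stronglyResolves_self_left (hΓ y x))⟩

theorem card_sub_one_le_card_of_isStrongResolvingSet (A : Finset V)
    (hA : ∀ x ∈ A, ∀ y ∈ A, x ≠ y → ∀ z, StronglyResolves Γ z x y → z = x ∨ z = y)
    {S : Finset V} (hS : IsStrongResolvingSet Γ S) : A.card - 1 ≤ S.card := by
  classical
  have hout : (A \ S).card ≤ 1 := by
    refine Finset.card_le_one.mpr fun x hx y hy => by_contra fun hxy => ?_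
    rw [Finset.mem_sdiff] at hx hy
    obtain ⟨z, hzS, hz⟩ := hS x y hxy
    rcases hA x hx.1 y hy.1 hxy z hz with rfl | rfl
    exacts [hx.2 hzS, hy.2 hzS]
  have := Finset.card_le_card_sdiff_add_card (s := A) (t := S)
  omega

variable [Fintype V]

theorem sdim_le_card {S : Finset V} (hS : IsStrongResolvingSet Γ S) : sdim Γ ≤ S.card :=
  Nat.sInf_le ⟨S, rfl, hS⟩

theorem le_sdim (hΓ : Γ.Connected) {k : ℕ}
    (h : ∀ S : Finset V, IsStrongResolvingSet Γ S → k ≤ S.card) : k ≤ sdim Γ := by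
  have huniv : IsStrongResolvingSet Γ (Finset.univ : Finset V) :=
    isStrongResolvingSet_of_forall_mem_or_mem hΓ fun x _ _ => .inl (by simp)
  exact le_csInf ⟨_, Finset.univ, rfl, huniv⟩ fun _ ⟨S, hS, hres⟩ => hS ▸ h S hres

end StrongResolving

section EnhancedPowerGraph

variable {G : Type*} [Group G]

theorem closure_pair_eq_zpowers {x y : G} (h : y ∈ zpowers x) :
    closure ({x, y} : Set G) = zpowers x := by
  refine le_antisymm ?_ (zpowers_le.mpr (subset_closure (Set.mem_insert x {y})))
  rw [closure_le, Set.insert_subset_iff, Set.singleton_subset_iff]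
  exact ⟨mem_zpowers x, h⟩

theorem enhancedPowerGraph_adj_of_mem_zpowers {x y : G} (hxy : x ≠ y) (h : y ∈ zpowers x) :
    (enhancedPowerGraph G).Adj x y :=
  ⟨hxy, closure_pair_eq_zpowers h ▸ inferInstance⟩

theorem enhancedPowerGraph_adj_one {y : G} (hy : y ≠ 1) : (enhancedPowerGraph G).Adj 1 y :=
  (enhancedPowerGraph_adj_of_mem_zpowers hy (one_mem _)).symm

theorem enhancedPowerGraph_reachable_one (x : G) : (enhancedPowerGraph G).Reachable 1 x := by
  rcases eq_or_ne x 1 with rfl | hx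
  · rfl
  · exact (enhancedPowerGraph_adj_one hx).reachable

theorem enhancedPowerGraph_connected : (enhancedPowerGraph G).Connected :=
  connected_iff_exists_forall_reachable _ |>.mpr ⟨1, enhancedPowerGraph_reachable_one⟩

theorem enhancedPowerGraph_dist_one_le (x : G) : (enhancedPowerGraph G).dist 1 x ≤ 1 := by
  rcases eq_or_ne x 1 with rfl | hx
  · simp
  · exact (dist_eq_one_iff_adj.mpr (enhancedPowerGraph_adj_one hx)).le

theorem enhancedPowerGraph_dist_le_two (x y : G) : (enhancedPowerGraph G).dist x y ≤ 2 :=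
  calc (enhancedPowerGraph G).dist x y
      ≤ (enhancedPowerGraph G).dist x 1 + (enhancedPowerGraph G).dist 1 y :=
        enhancedPowerGraph_connected.dist_triangle
    _ ≤ 2 := by
        rw [dist_comm]
        have := enhancedPowerGraph_dist_one_le x
        have := enhancedPowerGraph_dist_one_le y
        omega

theorem exists_mem_zpowers_of_enhancedPowerGraph_adj {x y : G}
    (h : (enhancedPowerGraph G).Adj x y) : ∃ w, x ∈ zpowers w ∧ y ∈ zpowers w := by
  obtain ⟨w, hw⟩ := (Subgroup.closure _).isCyclic_iff_exists_zpowers_eq_top.mp h.2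
  exact ⟨w, hw ▸ subset_closure (Set.mem_insert x {y}),
    hw ▸ subset_closure (Set.mem_insert_of_mem x rfl)⟩

theorem enhancedPowerGraph_adj_iff_of_isCyclic [IsCyclic G] {x y : G} :
    (enhancedPowerGraph G).Adj x y ↔ x ≠ y :=
  ⟨Adj.ne, fun h => ⟨h, inferInstance⟩⟩

/-- An element `g` of maximal order generates `G`: for any `y`, the cyclic group `⟨g, y⟩` has a
generator of order at least that of `g`, hence equal to `⟨g⟩`. -/
theorem isCyclic_of_forall_enhancedPowerGraph_adj [Finite G]
    (h : ∀ x y : G, x ≠ y → (enhancedPowerGraph G).Adj x y) : IsCyclic G := by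
  obtain ⟨g, hg⟩ := Finite.exists_max (orderOf : G → ℕ)
  refine isCyclic_iff_exists_zpowers_eq_top.mpr ⟨g, (eq_top_iff' _).mpr fun y => ?_⟩
  rcases eq_or_ne g y with rfl | hne
  · exact mem_zpowers g
  obtain ⟨w, hgw, hyw⟩ := exists_mem_zpowers_of_enhancedPowerGraph_adj (h g y hne)
  have hle : zpowers g ≤ zpowers w := zpowers_le.mpr hgw
  have : zpowers g = zpowers w :=
    eq_of_le_of_card_ge hle (by simpa only [Nat.card_zpowers] using hg w)
  exact this ▸ hyw

theorem zpowers_eq_of_mem_zpowers_of_prime [Finite G] {a w : G} (hw : (orderOf w).Prime)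
    (ha : a ≠ 1) (h : a ∈ zpowers w) : zpowers a = zpowers w := by
  have hord : orderOf a = orderOf w :=
    (hw.eq_one_or_self_of_dvd _ (orderOf_dvd_of_mem_zpowers h)).resolve_left
      (fun h1 => ha (orderOf_eq_one_iff.mp h1))
  exact eq_of_le_of_card_ge (zpowers_le.mpr h) (by rw [Nat.card_zpowers, Nat.card_zpowers, hord])

theorem zpowers_eq_of_enhancedPowerGraph_adj [Finite G]
    (hP : ∀ g : G, g ≠ 1 → (orderOf g).Prime) {x y : G} (hx : x ≠ 1) (hy : y ≠ 1)
    (h : (enhancedPowerGraph G).Adj x y) : zpowers x = zpowers y := by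
  obtain ⟨w, hxw, hyw⟩ := exists_mem_zpowers_of_enhancedPowerGraph_adj h
  have hw : w ≠ 1 := by
    rintro rfl
    exact hx (by simpa using hxw)
  rw [zpowers_eq_of_mem_zpowers_of_prime (hP w hw) hx hxw,
    zpowers_eq_of_mem_zpowers_of_prime (hP w hw) hy hyw]

end EnhancedPowerGraph

section StrongMetricDimension

variable {G : Type*} [Group G]

theorem eq_or_eq_of_stronglyResolves_of_isCyclic [IsCyclic G] {x y z : G} (hxy : x ≠ y)
    (h : StronglyResolves (enhancedPowerGraph G) z x y) : z = x ∨ z = y := by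
  have hdist : ∀ {a b : G}, a ≠ b → (enhancedPowerGraph G).dist a b = 1 := fun hab =>
    dist_eq_one_iff_adj.mpr (enhancedPowerGraph_adj_iff_of_isCyclic.mpr hab)
  by_contra! hz
  rcases h.dist_add_dist_le with h | h
  · rw [hdist hz.2, hdist hxy.symm, hdist hz.1] at h
    omega
  · rw [hdist hz.1, hdist hxy, hdist hz.2] at h
    omega

theorem eq_or_eq_of_stronglyResolves_of_prime_orderOf [Finite G]
    (hP : ∀ g : G, g ≠ 1 → (orderOf g).Prime) {x y z : G} (hx : x ≠ 1) (hy : y ≠ 1)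
    (hxy : x ≠ y) (h : StronglyResolves (enhancedPowerGraph G) z x y) : z = x ∨ z = y := by
  have hconn : (enhancedPowerGraph G).Connected := enhancedPowerGraph_connected
  have key : ∀ {a b : G}, a ≠ 1 → b ≠ 1 → a ≠ b → z ≠ a → z ≠ b →
      ¬(enhancedPowerGraph G).dist z b + (enhancedPowerGraph G).dist b a ≤
        (enhancedPowerGraph G).dist z a := by
    intro a b ha hb hab hza hzb hle
    have := hconn.pos_dist_of_ne hzb
    have := hconn.pos_dist_of_ne hab.symm
    have := enhancedPowerGraph_dist_le_two z a
    have hzb : (enhancedPowerGraph G).Adj z b := dist_eq_one_iff_adj.mp (by omega)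
    have hba : (enhancedPowerGraph G).Adj b a := dist_eq_one_iff_adj.mp (by omega)
    have hza' : ¬(enhancedPowerGraph G).Adj z a := fun hadj => by
      rw [dist_eq_one_iff_adj.mpr hadj] at hle
      omega
    rcases eq_or_ne z 1 with rfl | hz
    · exact hza' (enhancedPowerGraph_adj_one ha)
    · refine hza' (enhancedPowerGraph_adj_of_mem_zpowers hza ?_)
      rw [zpowers_eq_of_enhancedPowerGraph_adj hP hz hb hzb,
        zpowers_eq_of_enhancedPowerGraph_adj hP hb ha hba]
      exact mem_zpowers a
  by_contra! hz
  rcases h.dist_add_dist_le with h | h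
  · exact key hx hy hxy hz.1 hz.2 h
  · exact key hy hx hxy.symm hz.2 hz.1 h

variable [Fintype G]

theorem sdim_enhancedPowerGraph_of_isCyclic [IsCyclic G] :
    sdim (enhancedPowerGraph G) = Fintype.card G - 1 := by
  classical
  refine le_antisymm ?_ (le_sdim enhancedPowerGraph_connected fun S hS => ?_)
  · have hS : IsStrongResolvingSet (enhancedPowerGraph G) ↑(Finset.univ.erase (1 : G)) :=
      isStrongResolvingSet_of_forall_mem_or_mem enhancedPowerGraph_connected fun x y hxy => by
        by_cases hx : x = 1
        · exact .inr (by simp [← hx, Ne.symm hxy])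
        · exact .inl (by simp [hx])
    simpa using sdim_le_card hS
  · simpa using card_sub_one_le_card_of_isStrongResolvingSet Finset.univ
      (fun x _ y _ hxy z => eq_or_eq_of_stronglyResolves_of_isCyclic hxy) hS

theorem sdim_enhancedPowerGraph_le_of_not_isCyclic (hG : ¬IsCyclic G) :
    sdim (enhancedPowerGraph G) ≤ Fintype.card G - 2 := by
  classical
  obtain ⟨x, y, hxy, hnadj⟩ : ∃ x y : G, x ≠ y ∧ ¬(enhancedPowerGraph G).Adj y x := by
    by_contra! h
    exact hG (isCyclic_of_forall_enhancedPowerGraph_adj fun a b hab => h b a hab.symm)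
  have hx : x ≠ 1 := by
    rintro rfl
    exact hnadj (enhancedPowerGraph_adj_one hxy.symm).symm
  have hy : y ≠ 1 := by
    rintro rfl
    exact hnadj (enhancedPowerGraph_adj_one hxy)
  have hres : StronglyResolves (enhancedPowerGraph G) y x 1 :=
    stronglyResolves_of_adj_of_adj (enhancedPowerGraph_adj_one hy).symm
      (enhancedPowerGraph_adj_one hx) hxy.symm hnadj
  let S : Finset G := (Finset.univ.erase 1).erase x
  have hyS : y ∈ S := by simp [S, hy, hxy.symm]
  have hS : IsStrongResolvingSet (enhancedPowerGraph G) ↑S := by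
    intro a b hab
    by_cases ha : a ∈ S
    · exact ⟨a, ha, stronglyResolves_self_left (enhancedPowerGraph_connected a b)⟩
    by_cases hb : b ∈ S
    · exact ⟨b, hb, stronglyResolves_comm.mp
        (stronglyResolves_self_left (enhancedPowerGraph_connected b a))⟩
    simp only [S, Finset.mem_erase, Finset.mem_univ, and_true, not_and_or, not_not] at ha hb
    refine ⟨y, hyS, ?_⟩
    rcases ha with rfl | rfl <;> rcases hb with rfl | rfl
    exacts [absurd rfl hab, hres, stronglyResolves_comm.mp hres, absurd rfl hab]
  have hcard : S.card = Fintype.card G - 2 := by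
    rw [Finset.card_erase_of_mem (by simp [hx]), Finset.card_erase_of_mem (Finset.mem_univ 1),
      Finset.card_univ]
    omega
  exact hcard ▸ sdim_le_card hS

theorem card_sub_two_le_sdim_enhancedPowerGraph (hP : ∀ g : G, g ≠ 1 → (orderOf g).Prime) :
    Fintype.card G - 2 ≤ sdim (enhancedPowerGraph G) := by
  classical
  refine le_sdim enhancedPowerGraph_connected fun S hS => ?_
  have := card_sub_one_le_card_of_isStrongResolvingSet (Finset.univ.erase 1)
    (fun x hx y hy hxy z => eq_or_eq_of_stronglyResolves_of_prime_orderOf hP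
      (Finset.ne_of_mem_erase hx) (Finset.ne_of_mem_erase hy) hxy) hS
  rw [Finset.card_erase_of_mem (Finset.mem_univ 1), Finset.card_univ] at this
  omega

end StrongMetricDimension

/-- Corollary 4.6: (i) `sdim(𝒫_E(G)) = n - 1` iff `G` is cyclic;
(ii) if `G` is a non-cyclic `𝒫`-group then `sdim(𝒫_E(G)) = n - 2`. -/
theorem sdim_enhancedPowerGraph_cyclic_and_Pgroup (G : Type*) [Group G] [Fintype G] :
    (sdim (enhancedPowerGraph G) = Fintype.card G - 1 ↔ IsCyclic G) ∧
    (¬IsCyclic G ∧ (∀ g : G, g ≠ 1 → (orderOf g).Prime) →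
      sdim (enhancedPowerGraph G) = Fintype.card G - 2) := by
  refine ⟨⟨fun h => ?_, fun _ => sdim_enhancedPowerGraph_of_isCyclic⟩, fun ⟨hG, hP⟩ =>
    (sdim_enhancedPowerGraph_le_of_not_isCyclic hG).antisymm
      (card_sub_two_le_sdim_enhancedPowerGraph hP)⟩
  by_contra hG
  have : Nontrivial G := not_subsingleton_iff_nontrivial.mp fun _ => hG isCyclic_of_subsingleton
  have := Fintype.one_lt_card (α := G)
  have := sdim_enhancedPowerGraph_le_of_not_isCyclic hG
  omega
end

section
/- Let G be a finite group and g ∈ G. Then the ≡-class of g in the enhanced power graph 𝒫_E(G) equals 𝒞(g) := (⋂_{M ∈ ℳ_g} M) \ (⋃_{M ∈ ℳ_G∖ℳ_g} M). In particular, {x ∈ G : ⟨x⟩ = ⟨g⟩} ⊆ ḡ. -/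
/-! Since `G` is finite, every cyclic subgroup lies in a maximal one, so `N[x]` is the union of
the maximal cyclic subgroups containing `x`; and a maximal cyclic subgroup `⟨m⟩` contains `x`
exactly when its generator `m` lies in `N[x]`. Hence `N[x]` and `ℳ_x` determine each other, so `x ≡ g` iff `ℳ_x = ℳ_g`, i.e. iff `x` lies in every member of `ℳ_g`
and in no other maximal cyclic subgroup. -/

section EnhancedPowerGraph

variable {G : Type*} [Group G]

theorem isMaxCyclic_iff_maximal {M : Subgroup G} :
    IsMaxCyclic M ↔ Maximal (fun H : Subgroup G => IsCyclic H) M :=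
  ⟨fun h => ⟨h.1, fun N hN hle => (h.2 N hN hle).ge⟩,
    fun h => ⟨h.1, fun _ hN hle => le_antisymm hle (h.2 hN hle)⟩⟩

theorem exists_le_isMaxCyclic [Finite G] {H : Subgroup G} (hH : IsCyclic H) :
    ∃ M, H ≤ M ∧ IsMaxCyclic M := by
  obtain ⟨M, hle, hM⟩ := Finite.exists_le_maximal (p := fun H : Subgroup G => IsCyclic H) hH
  exact ⟨M, hle, isMaxCyclic_iff_maximal.2 hM⟩

theorem mem_closedNbhd_enhancedPowerGraph_iff_isCyclic {x y : G} :
    y ∈ closedNbhd (enhancedPowerGraph G) x ↔ IsCyclic (Subgroup.closure {x, y}) := by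
  rcases eq_or_ne y x with rfl | hne
  · rw [Set.pair_eq_singleton, ← Subgroup.zpowers_eq_closure]
    simp only [closedNbhd, Set.mem_insert, true_iff]
    infer_instance
  · simp [closedNbhd, hne, enhancedPowerGraph, hne.symm]

theorem mem_closedNbhd_enhancedPowerGraph_iff [Finite G] {x y : G} :
    y ∈ closedNbhd (enhancedPowerGraph G) x ↔ ∃ M ∈ maxCyclicOn x, y ∈ M := by
  rw [mem_closedNbhd_enhancedPowerGraph_iff_isCyclic]
  constructor
  · intro h
    obtain ⟨M, hle, hM⟩ := exists_le_isMaxCyclic h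
    have hx : x ∈ Subgroup.closure {x, y} := Subgroup.subset_closure (Set.mem_insert x _)
    have hy : y ∈ Subgroup.closure {x, y} := Subgroup.subset_closure (Set.mem_insert_of_mem x rfl)
    exact ⟨M, ⟨hM, hle hx⟩, hle hy⟩
  · rintro ⟨M, ⟨hM, hxM⟩, hyM⟩
    have : IsCyclic M := hM.1
    refine Subgroup.isCyclic_of_le (Subgroup.closure_le M |>.2 ?_)
    rintro z (rfl | rfl) <;> assumption

theorem IsMaxCyclic.mem_iff_generator_mem_closedNbhd [Finite G] {M : Subgroup G}
    (hM : IsMaxCyclic M) {m : G} (hm : Subgroup.zpowers m = M) (x : G) :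
    x ∈ M ↔ m ∈ closedNbhd (enhancedPowerGraph G) x := by
  rw [mem_closedNbhd_enhancedPowerGraph_iff]
  constructor
  · intro hxM
    exact ⟨M, ⟨hM, hxM⟩, hm ▸ Subgroup.mem_zpowers m⟩
  · rintro ⟨N, ⟨hN, hxN⟩, hmN⟩
    have hMN : M ≤ N := hm ▸ Subgroup.zpowers_le.2 hmN
    exact hM.2 N hN.1 hMN ▸ hxN

theorem closedNbhd_enhancedPowerGraph_eq_iff [Finite G] {x g : G} :
    closedNbhd (enhancedPowerGraph G) x = closedNbhd (enhancedPowerGraph G) g ↔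
      maxCyclicOn x = maxCyclicOn g := by
  constructor
  · intro h
    ext M
    refine and_congr_right fun hM => ?_
    obtain ⟨m, hm⟩ := (Subgroup.isCyclic_iff_exists_zpowers_eq_top M).1 hM.1
    rw [hM.mem_iff_generator_mem_closedNbhd hm, hM.mem_iff_generator_mem_closedNbhd hm, h]
  · intro h
    ext y
    rw [mem_closedNbhd_enhancedPowerGraph_iff, mem_closedNbhd_enhancedPowerGraph_iff, h]

theorem maxCyclicOn_eq_iff_mem_diff {x g : G} :
    maxCyclicOn x = maxCyclicOn g ↔
      x ∈ (⋂ M ∈ maxCyclicOn g, (M : Set G)) \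
        (⋃ M ∈ {M : Subgroup G | IsMaxCyclic M} \ maxCyclicOn g, (M : Set G)) := by
  simp only [Set.ext_iff, maxCyclicOn, Set.mem_sdiff, Set.mem_iInter₂, Set.mem_iUnion₂,
    Set.mem_ofPred_eq, SetLike.mem_coe, not_exists, not_and, exists_prop, and_imp,
    and_congr_right_iff]
  constructor
  · intro h
    exact ⟨fun M hM hgM => (h M hM).2 hgM, fun M hM hgM hxM => hgM hM ((h M hM).1 hxM)⟩
  · rintro ⟨hmem, hnot⟩ M hM
    exact ⟨fun hxM => by_contra fun hgM => hnot M hM (fun _ => hgM) hxM, hmem M hM⟩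

theorem maxCyclicOn_eq_of_zpowers_eq {x g : G} (h : Subgroup.zpowers x = Subgroup.zpowers g) :
    maxCyclicOn x = maxCyclicOn g := by
  ext M
  simp only [maxCyclicOn, Set.mem_ofPred_eq, ← Subgroup.zpowers_le, h]

end EnhancedPowerGraph

/-- Lemma 4.1: the `≡`-class of `g` in `𝒫_E(G)` equals
`𝒞(g) = (⋂_{M ∈ ℳ_g} M) \ (⋃_{M ∈ ℳ_G ∖ ℳ_g} M)`; in particular it contains
`{x : ⟨x⟩ = ⟨g⟩}`. -/
theorem equivClass_enhancedPowerGraph_eq (G : Type*) [Group G] [Fintype G] (g : G) :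
    {x : G | closedNbhd (enhancedPowerGraph G) x = closedNbhd (enhancedPowerGraph G) g} =
      (⋂ M ∈ maxCyclicOn g, (M : Set G)) \
        (⋃ M ∈ {M : Subgroup G | IsMaxCyclic M} \ maxCyclicOn g, (M : Set G)) ∧
    {x : G | Subgroup.zpowers x = Subgroup.zpowers g} ⊆
      {x : G | closedNbhd (enhancedPowerGraph G) x = closedNbhd (enhancedPowerGraph G) g} :=
  ⟨Set.ext fun _ => closedNbhd_enhancedPowerGraph_eq_iff.trans maxCyclicOn_eq_iff_mem_diff,
    fun _ hx => closedNbhd_enhancedPowerGraph_eq_iff.2 (maxCyclicOn_eq_of_zpowers_eq hx)⟩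
end

section
/- Let G be a finite group. Then the clique number of the reduced power graph satisfies ω(𝒫_R(G)) = max{Ω(m) : m ∈ π_e(G)} + 1. -/
/-! If `⟨x⟩ < ⟨y⟩` then `o(x)` is a proper divisor of `o(y)`, so `Ω(o(x)) < Ω(o(y))`: along a
clique the map `x ↦ Ω(o(x))` is injective with values in `{0, …, max Ω}`. Conversely, if
`o(g) = p₁ ⋯ pₖ` then `g, g ^ p₁, g ^ (p₁ p₂), …, g ^ (p₁ ⋯ pₖ)` generate a strictly decreasing
chain of cyclic subgroups, i.e. a clique with `Ω(o(g)) + 1` elements. -/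

open ArithmeticFunction

open scoped ArithmeticFunction.Omega

lemma bigOmega_eq_cardFactors (n : ℕ) : bigOmega n = Ω n :=
  cardFactors_apply.symm

lemma bigOmega_lt_of_dvd_of_ne {a b : ℕ} (hab : a ∣ b) (hne : a ≠ b) (hb : b ≠ 0) :
    bigOmega a < bigOmega b := by
  obtain ⟨c, rfl⟩ := hab
  have hc : 1 < c := Nat.one_lt_iff_ne_zero_and_ne_one.mpr
    ⟨right_ne_zero_of_mul hb, by rintro rfl; exact hne (mul_one a).symm⟩
  rw [bigOmega_eq_cardFactors, bigOmega_eq_cardFactors,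
    cardFactors_mul (left_ne_zero_of_mul hb) (right_ne_zero_of_mul hb)]
  exact Nat.lt_add_of_pos_right (cardFactors_pos_iff_one_lt.mpr hc)

lemma bigOmega_div_add_one_of_prime_dvd {n p : ℕ} (hn : n ≠ 0) (hp : p.Prime) (hpn : p ∣ n) :
    bigOmega (n / p) + 1 = bigOmega n := by
  have hq : n / p ≠ 0 := (Nat.div_pos (Nat.le_of_dvd (Nat.pos_of_ne_zero hn) hpn) hp.pos).ne'
  conv_rhs => rw [← Nat.mul_div_cancel' hpn]
  rw [bigOmega_eq_cardFactors, bigOmega_eq_cardFactors, cardFactors_mul hp.ne_zero hq,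
    cardFactors_apply_prime hp, add_comm]

section Group

variable {G : Type*} [Group G]

open Subgroup

lemma bigOmega_orderOf_lt_of_zpowers_lt {x y : G} (hy : IsOfFinOrder y)
    (h : zpowers x < zpowers y) : bigOmega (orderOf x) < bigOmega (orderOf y) := by
  have hdvd : orderOf x ∣ orderOf y := by
    simpa only [Nat.card_zpowers] using card_dvd_of_le h.le
  have hne : orderOf x ≠ orderOf y := by
    intro he
    have : Finite (zpowers y) := hy.finite_zpowers.to_subtype
    refine h.ne (eq_of_le_of_card_ge h.le ?_)
    rw [Nat.card_zpowers, Nat.card_zpowers, he]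
  exact bigOmega_lt_of_dvd_of_ne hdvd hne hy.orderOf_pos.ne'

lemma zpowers_pow_lt_of_prime_dvd {g : G} (hg : IsOfFinOrder g) {p : ℕ} (hp : p.Prime)
    (hpg : p ∣ orderOf g) : zpowers (g ^ p) < zpowers g := by
  refine lt_of_le_of_ne (zpowers_le.mpr (pow_mem (mem_zpowers g) p)) fun he => ?_
  have hcard := congrArg (fun H : Subgroup G => Nat.card H) he
  simp only [Nat.card_zpowers, orderOf_pow_of_dvd hp.ne_zero hpg] at hcard
  exact (Nat.div_lt_self hg.orderOf_pos hp.one_lt).ne hcard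

lemma card_le_succ_of_isClique_reducedPowerGraph {s : Finset G}
    (hs : (reducedPowerGraph G).IsClique (s : Set G)) (hfin : ∀ x ∈ s, IsOfFinOrder x) {k : ℕ}
    (hk : ∀ x ∈ s, bigOmega (orderOf x) ≤ k) : s.card ≤ k + 1 := by
  classical
  have hinj : Set.InjOn (fun x => bigOmega (orderOf x)) (s : Set G) := by
    intro x hx y hy hxy
    by_contra hne
    rcases hs hx hy hne with h | h
    · exact (bigOmega_orderOf_lt_of_zpowers_lt (hfin y hy) h).ne hxy
    · exact (bigOmega_orderOf_lt_of_zpowers_lt (hfin x hx) h).ne' hxy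
  calc s.card = (s.image fun x => bigOmega (orderOf x)).card :=
        (Finset.card_image_of_injOn hinj).symm
    _ ≤ (Finset.range (k + 1)).card :=
      Finset.card_le_card fun m hm => by
        obtain ⟨x, hx, rfl⟩ := Finset.mem_image.mp hm
        exact Finset.mem_range_succ_iff.mpr (hk x hx)
    _ = k + 1 := Finset.card_range _

lemma exists_isNClique_reducedPowerGraph_bigOmega_orderOf {g : G} (hg : IsOfFinOrder g) :
    ∃ s : Finset G, (reducedPowerGraph G).IsNClique (bigOmega (orderOf g) + 1) s ∧
      ∀ x ∈ s, zpowers x ≤ zpowers g := by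
  classical
  induction hn : bigOmega (orderOf g) generalizing g with
  | zero => exact ⟨{g}, SimpleGraph.isNClique_singleton.mpr rfl, by simp⟩
  | succ n ih =>
    have hg1 : orderOf g ≠ 1 := by rintro h; simp [h, bigOmega] at hn
    have hp : (orderOf g).minFac.Prime := Nat.minFac_prime hg1
    have hpg : (orderOf g).minFac ∣ orderOf g := Nat.minFac_dvd _
    have hlt := zpowers_pow_lt_of_prime_dvd hg hp hpg
    have hn' : bigOmega (orderOf (g ^ (orderOf g).minFac)) = n := by
      have := bigOmega_div_add_one_of_prime_dvd hg.orderOf_pos.ne' hp hpg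
      rw [orderOf_pow_of_dvd hp.ne_zero hpg]
      omega
    obtain ⟨s, hs, hsg⟩ := ih hg.pow hn'
    refine ⟨insert g s, hs.insert fun x hx => Or.inr ((hsg x hx).trans_lt hlt), ?_⟩
    simp only [Finset.mem_insert, forall_eq_or_imp, le_refl, true_and]
    exact fun x hx => (hsg x hx).trans hlt.le

end Group

/-- Lemma 5.4: `ω(𝒫_R(G)) = max{Ω(m) : m ∈ π_e(G)} + 1`. -/
theorem cliqueNum_reducedPowerGraph (G : Type*) [Group G] [Fintype G] :
    (reducedPowerGraph G).cliqueNum =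
      sSup (bigOmega '' Set.range (orderOf : G → ℕ)) + 1 := by
  have hbdd : BddAbove (bigOmega '' Set.range (orderOf : G → ℕ)) :=
    ((Set.finite_range _).image _).bddAbove
  obtain ⟨_, ⟨g, rfl⟩, hgk⟩ := Nat.sSup_mem (Set.range_nonempty _ |>.image _) hbdd
  set k := sSup (bigOmega '' Set.range (orderOf : G → ℕ))
  have hle : ∀ x : G, bigOmega (orderOf x) ≤ k := fun x => le_csSup hbdd ⟨_, ⟨x, rfl⟩, rfl⟩
  apply le_antisymm
  · obtain ⟨s, hs⟩ := (reducedPowerGraph G).exists_isNClique_cliqueNum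
    rw [← hs.card_eq]
    exact card_le_succ_of_isClique_reducedPowerGraph hs.isClique
      (fun x _ => isOfFinOrder_of_finite x) fun x _ => hle x
  · obtain ⟨s, hs, -⟩ := exists_isNClique_reducedPowerGraph_bigOmega_orderOf
      (isOfFinOrder_of_finite g)
    rw [← hgk, ← hs.card_eq]
    exact hs.isClique.card_le_cliqueNum
end
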